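/- For every finite rooted tree T, |n_{P_K}(T) - |K(T)|| ≤ 1, where P_K is the subtree property that the root of the subtree has at least two children and at least one of the subtrees rooted at its children is a line-graph (path) ending in a leaf, and K(T) is the set of exterior major vertices of T. -/

import Mathlib

open SimpleGraph

variable {V : Type*} [Fintype V]

/-- `w` is a child of `v` in the tree `G` rooted at `r`. -/
def IsChild (G : SimpleGraph V) (r v w : V) : Prop :=
  G.Adj v w ∧ G.dist r w = G.dist r v + 1

/-- `w` belongs to the subtree `T_v` of the tree `G` rooted at `r`
(i.e. `v` lies on the path from the root to `w`). -/
def InSubtree (G : SimpleGraph V) (r v w : V) : Prop :=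
  G.dist r w = G.dist r v + G.dist v w

/-- The subtree rooted at `v` is a line-graph: every vertex of it has at most one child. -/
def SubtreeIsLine (G : SimpleGraph V) (r v : V) : Prop :=
  ∀ u, InSubtree G r v u → Nat.card {w : V // IsChild G r u w} ≤ 1

/-- The subtree property `P_K` at vertex `v`: `v` has at least two children and at least one
child whose subtree is a line-graph. -/
def HasPK (G : SimpleGraph V) (r v : V) : Prop :=
  2 ≤ Nat.card {w : V // IsChild G r v w} ∧ ∃ w, IsChild G r v w ∧ SubtreeIsLine G r w

/-- A leaf: a vertex of degree 1. -/
def IsLeafVx (G : SimpleGraph V) [DecidableRel G.Adj] (v : V) : Prop :=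
  G.degree v = 1

/-- An exterior major vertex: a vertex of degree at least 3 having a path to a leaf all of
whose internal vertices have degree 2. -/
def IsExtMajor (G : SimpleGraph V) [DecidableRel G.Adj] (v : V) : Prop :=
  3 ≤ G.degree v ∧ ∃ (l : V) (p : G.Walk v l), IsLeafVx G l ∧ p.IsPath ∧
    ∀ u ∈ p.support, u ≠ v → u ≠ l → G.degree u = 2

/-!
Root the tree at `r`; a vertex other than `r` has degree one more than its number of children.
A non-root vertex with `P_K` thus has degree at least `3`, and its line child's subtree contains
a leg to a leaf, so it is exterior major. Conversely, let `v` be exterior major without `P_K`.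
Its leg cannot go down into a child, whose subtree would then be a line; so it climbs through
vertices with a single child until it ends at the root or turns down there into a line branch.
Hence every non-root vertex with two children lies in `T_v`, and two such `v` lie in each other's
subtrees, so they coincide: the two counts differ at `r` on one side and at most one vertex on
the other.
-/

open SimpleGraph Walk

section RootedTree

-- A fresh `V`, so that the ambient `[Fintype V]` is assumed only where it is needed.
variable {V : Type*} {G : SimpleGraph V} {r a b c u v w x l : V}

noncomputable def numChildren (G : SimpleGraph V) (r v : V) : ℕ :=
  Nat.card {w : V // IsChild G r v w}

lemma IsChild.ne_root (h : IsChild G r v c) : c ≠ r := by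
  rintro rfl
  simpa using h.2

lemma isChild_or_isChild_of_adj (hT : G.IsTree) (r : V) (h : G.Adj v w) :
    IsChild G r v w ∨ IsChild G r w v :=
  (hT.dist_eq_dist_add_one_of_adj r h).elim (fun h' => Or.inr ⟨h.symm, h'⟩)
    (fun h' => Or.inl ⟨h, h'⟩)

lemma SimpleGraph.Connected.dist_lt_card [Fintype V] (hG : G.Connected) (u v : V) :
    G.dist u v < Fintype.card V := by
  obtain ⟨p, hp, hpl⟩ := hG.exists_path_of_dist u v
  exact hpl ▸ hp.length_lt

lemma inSubtree_self (G : SimpleGraph V) (r v : V) : InSubtree G r v v := by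
  simp [InSubtree]

lemma inSubtree_root (G : SimpleGraph V) (r v : V) : InSubtree G r r v := by
  simp [InSubtree]

lemma IsChild.inSubtree (h : IsChild G r v c) : InSubtree G r v c := by
  rw [InSubtree, dist_eq_one_iff_adj.2 h.1]
  exact h.2

lemma InSubtree.dist_le (h : InSubtree G r u v) : G.dist r u ≤ G.dist r v := by
  rw [h]
  exact Nat.le_add_right _ _

lemma InSubtree.trans (hT : G.IsTree) (h : InSubtree G r u v) (h' : InSubtree G r v w) :
    InSubtree G r u w := by
  have : G.dist u w ≤ G.dist u v + G.dist v w := hT.connected.dist_triangle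
  have : G.dist r w ≤ G.dist r u + G.dist u w := hT.connected.dist_triangle
  unfold InSubtree at *
  omega

lemma InSubtree.antisymm (hT : G.IsTree) (h : InSubtree G r u v) (h' : InSubtree G r v u) :
    u = v := by
  unfold InSubtree at h h'
  exact hT.connected.dist_eq_zero_iff.1 (by omega)

lemma exists_isChild_inSubtree (hT : G.IsTree) (hx : InSubtree G r u x) (hne : x ≠ u) :
    ∃ c, IsChild G r u c ∧ InSubtree G r c x := by
  obtain ⟨p, hp⟩ := hT.connected.exists_walk_length_eq_dist u x
  cases p with
  | nil => exact absurd rfl hne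
  | @cons _ w _ h q =>
    have : G.dist w x ≤ q.length := dist_le q
    have : G.dist r x ≤ G.dist r w + G.dist w x := hT.connected.dist_triangle
    rw [length_cons] at hp
    unfold InSubtree at *
    rcases isChild_or_isChild_of_adj hT r h with hc | hc
    · exact ⟨w, hc, by have := hc.2; omega⟩
    · have := hc.2; omega

-- On a geodesic from `r` to `w` every vertex is closer to `r` than the child `v`, so the
-- geodesic extended by the edge `wv` is the unique path from `r` to `v`.
lemma IsChild.mem_support_of_isPath (hT : G.IsTree) (hc : IsChild G r w v) {p : G.Walk r v}
    (hp : p.IsPath) : w ∈ p.support := by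
  classical
  obtain ⟨q, hq, hql⟩ := hT.connected.exists_path_of_dist r w
  refine hT.isAcyclic.mem_support_of_ne_mem_support_of_adj_of_isPath hp hq hc.1.symm ?_
  intro hv
  have := dist_le (q.takeUntil v hv)
  have := q.length_takeUntil_le_length hv
  have := hc.2
  omega

lemma IsChild.parent_unique (hT : G.IsTree) (h : IsChild G r w v) (h' : IsChild G r u v) :
    w = u := by
  obtain ⟨p, hp, -⟩ := hT.connected.exists_path_of_dist r v
  rw [hT.isAcyclic.eq_penultimate_of_adj_end hp h.1.symm (h.mem_support_of_isPath hT hp),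
    hT.isAcyclic.eq_penultimate_of_adj_end hp h'.1.symm (h'.mem_support_of_isPath hT hp)]

lemma exists_isChild_of_ne_root (hT : G.IsTree) (hv : v ≠ r) : ∃ w, IsChild G r w v := by
  obtain ⟨p, hp⟩ := hT.connected.exists_walk_length_eq_dist v r
  cases p with
  | nil => exact absurd rfl hv
  | @cons _ w _ h q =>
    have : G.dist w r ≤ q.length := dist_le q
    rw [length_cons] at hp
    rcases isChild_or_isChild_of_adj hT r h with hc | hc
    · have := hc.2
      rw [dist_comm (u := r), dist_comm (u := r)] at this
      omega
    · exact ⟨w, hc⟩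

lemma degree_eq_numChildren_add_one [Fintype V] [DecidableRel G.Adj] (hT : G.IsTree)
    (hv : v ≠ r) : G.degree v = numChildren G r v + 1 := by
  obtain ⟨w, hw⟩ := exists_isChild_of_ne_root hT hv
  have hN : G.neighborSet v = insert w {c | IsChild G r v c} := by
    ext c
    simp only [mem_neighborSet, Set.mem_insert_iff, Set.mem_ofPred_eq]
    refine ⟨fun h => ?_, ?_⟩
    · exact (isChild_or_isChild_of_adj hT r h).symm.imp (·.parent_unique hT hw) id
    · rintro (rfl | h)
      exacts [hw.1.symm, h.1]
  have hwv : w ∉ {c | IsChild G r v c} := fun h => by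
    have := h.2
    have := hw.2
    omega
  rw [← card_neighborSet_eq_degree, ← Nat.card_eq_fintype_card, hN, Nat.card_coe_set_eq,
    Set.ncard_insert_of_notMem hwv, ← Nat.card_coe_set_eq]
  rfl

lemma degree_root_eq_numChildren [Fintype V] [DecidableRel G.Adj] (hT : G.IsTree) (r : V) :
    G.degree r = numChildren G r r := by
  have hN : G.neighborSet r = {c | IsChild G r r c} := by
    ext c
    simp only [mem_neighborSet, Set.mem_ofPred_eq]
    refine ⟨fun h => ?_, fun h => h.1⟩
    exact (isChild_or_isChild_of_adj hT r h).resolve_right fun h' => h'.ne_root rfl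
  rw [← card_neighborSet_eq_degree, ← Nat.card_eq_fintype_card, hN]
  rfl

lemma one_le_numChildren [Finite V] (h : IsChild G r v c) : 1 ≤ numChildren G r v :=
  have : Nonempty {w : V // IsChild G r v w} := ⟨⟨c, h⟩⟩
  Nat.card_pos

lemma IsChild.eq_of_numChildren_le_one [Finite V] (hn : numChildren G r v ≤ 1)
    (h : IsChild G r v c) (h' : IsChild G r v w) : c = w :=
  congrArg Subtype.val ((Finite.card_le_one_iff_subsingleton.1 hn).elim ⟨c, h⟩ ⟨w, h'⟩)

lemma two_le_numChildren [Finite V] (h : IsChild G r v c) (h' : IsChild G r v w)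
    (hne : c ≠ w) : 2 ≤ numChildren G r v :=
  Finite.one_lt_card_iff_nontrivial.2
    ⟨⟨c, h⟩, ⟨w, h'⟩, fun e => hne (Subtype.ext_iff.1 e)⟩

lemma three_le_numChildren [Finite V] (h : IsChild G r v a) (h' : IsChild G r v b)
    (h'' : IsChild G r v c) (hab : a ≠ b) (hac : a ≠ c) (hbc : b ≠ c) :
    3 ≤ numChildren G r v := by
  have := Fintype.ofFinite {w : V // IsChild G r v w}
  rw [numChildren, Nat.card_eq_fintype_card]
  exact Fintype.two_lt_card_iff.2
    ⟨⟨a, h⟩, ⟨b, h'⟩, ⟨c, h''⟩, by simp [hab, hac, hbc]⟩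

lemma InSubtree.to_child [Finite V] (hT : G.IsTree) (hu : InSubtree G r v u)
    (huv : u ≠ v) (hn : numChildren G r v ≤ 1) (hc : IsChild G r v c) : InSubtree G r c u := by
  obtain ⟨c', hc', hc'u⟩ := exists_isChild_inSubtree hT hu huv
  rwa [hc.eq_of_numChildren_le_one hn hc']

lemma SubtreeIsLine.to_child (hT : G.IsTree) (hline : SubtreeIsLine G r v)
    (hc : IsChild G r v c) : SubtreeIsLine G r c :=
  fun u hu => hline u (hc.inSubtree.trans hT hu)

lemma SubtreeIsLine.to_parent [Finite V] (hT : G.IsTree) (hline : SubtreeIsLine G r c)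
    (hc : IsChild G r v c) (hn : numChildren G r v ≤ 1) : SubtreeIsLine G r v := by
  intro u hu
  by_cases huv : u = v
  · exact huv ▸ hn
  · exact hline u (hu.to_child hT huv hn hc)

def IsTopBranching (G : SimpleGraph V) (r v : V) : Prop :=
  v ≠ r ∧ 2 ≤ numChildren G r v ∧
    ∀ u, u ≠ r → 2 ≤ numChildren G r u → InSubtree G r v u

lemma IsTopBranching.eq (hT : G.IsTree) {v' : V} (h : IsTopBranching G r v)
    (h' : IsTopBranching G r v') : v = v' :=
  (h.2.2 v' h'.1 h'.2.1).antisymm hT (h'.2.2 v h.1 h.2.1)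

end RootedTree

section Legs

variable {G : SimpleGraph V} [DecidableRel G.Adj] {r a b u v w l : V}

-- A leg of an exterior major vertex with the major vertex removed.
def IsThread (q : G.Walk b l) : Prop :=
  q.IsPath ∧ IsLeafVx G l ∧ ∀ x ∈ q.support, x ≠ l → G.degree x = 2

lemma IsThread.tail {h : G.Adj a b} {q : G.Walk b l} (hq : IsThread (cons h q)) : IsThread q :=
  ⟨hq.1.of_cons, hq.2.1, fun x hx => hq.2.2 x (List.mem_cons_of_mem a hx)⟩

lemma IsThread.notMem_support {h : G.Adj a b} {q : G.Walk b l} (hq : IsThread (cons h q)) :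
    a ∉ q.support :=
  ((cons_isPath_iff h q).1 hq.1).2

lemma IsThread.degree_start {h : G.Adj a b} {q : G.Walk b l} (hq : IsThread (cons h q)) :
    G.degree a = 2 :=
  hq.2.2 a (start_mem_support _) fun hal => hq.notMem_support (hal ▸ q.end_mem_support)

lemma isExtMajor_iff_exists_isThread : IsExtMajor G v ↔ 3 ≤ G.degree v ∧
    ∃ w, G.Adj v w ∧ ∃ (l : V) (q : G.Walk w l), v ∉ q.support ∧ IsThread q := by
  refine ⟨fun ⟨hdeg, l, p, hl, hp, hint⟩ => ?_,
    fun ⟨hdeg, w, h, l, q, hvq, hq, hl, hint⟩ => ?_⟩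
  · cases p with
    | nil => exact absurd hl (by unfold IsLeafVx; omega)
    | cons h q =>
      have hvq := ((cons_isPath_iff h q).1 hp).2
      refine ⟨hdeg, _, h, l, q, hvq, hp.of_cons, hl, fun x hx hxl => hint x ?_ ?_ hxl⟩
      · exact List.mem_cons_of_mem v hx
      · rintro rfl; exact hvq hx
  · refine ⟨hdeg, l, cons h q, hl, hq.cons hvq, fun x hx hxv hxl => hint x ?_ hxl⟩
    exact (List.mem_cons.1 hx).resolve_left hxv

lemma IsThread.subtreeIsLine (hT : G.IsTree) {q : G.Walk b l} (hq : IsThread q)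
    (hab : IsChild G r a b) (haq : a ∉ q.support) : SubtreeIsLine G r b := by
  induction q generalizing a with
  | @nil x =>
    have : G.degree x = numChildren G r x + 1 := degree_eq_numChildren_add_one hT hab.ne_root
    have hleaf : G.degree x = 1 := hq.2.1
    intro u hu
    by_cases hux : u = x
    · subst hux
      exact (by omega : numChildren G r u ≤ 1)
    · obtain ⟨c, hc, -⟩ := exists_isChild_inSubtree hT hu hux
      have := one_le_numChildren hc
      omega
  | @cons b b' l h q ih =>
    have hb : G.degree b = numChildren G r b + 1 := degree_eq_numChildren_add_one hT hab.ne_root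
    have := hq.degree_start
    have hc : IsChild G r b b' := (isChild_or_isChild_of_adj hT r h).resolve_right fun hp =>
      haq (hp.parent_unique hT hab ▸ List.mem_cons_of_mem b q.start_mem_support)
    exact (ih hq.tail hc hq.notMem_support).to_parent hT hc (by omega)

lemma SubtreeIsLine.exists_isThread (hT : G.IsTree) (hw : w ≠ r)
    (hline : SubtreeIsLine G r w) :
    ∃ (l : V) (q : G.Walk w l), IsThread q ∧ ∀ x ∈ q.support, InSubtree G r w x := by
  induction hn : Fintype.card V - G.dist r w using Nat.strong_induction_on generalizing w with
  | _ n ih =>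
  have hdeg := degree_eq_numChildren_add_one hT hw
  by_cases hc : ∃ c, IsChild G r w c
  · obtain ⟨c, hc⟩ := hc
    have := hT.connected.dist_lt_card r c
    have := hc.2
    obtain ⟨l, q, hq, hsub⟩ :=
      ih _ (by omega) hc.ne_root (hline.to_child hT hc) rfl
    have hwq : w ∉ q.support := fun h => by
      have := (hsub w h).dist_le
      omega
    have := hline w (inSubtree_self G r w)
    have := one_le_numChildren hc
    refine ⟨l, cons hc.1 q, ⟨hq.1.cons hwq, hq.2.1, fun x hx hxl => ?_⟩, fun x hx => ?_⟩
    · rcases List.mem_cons.1 hx with rfl | hx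
      · change numChildren G r x ≤ 1 at *
        omega
      · exact hq.2.2 x hx hxl
    · rcases List.mem_cons.1 hx with rfl | hx
      exacts [inSubtree_self G r x, hc.inSubtree.trans hT (hsub x hx)]
  · push Not at hc
    have : numChildren G r w = 0 := Finite.card_eq_zero_iff.2 ⟨fun c => hc c c.2⟩
    have hleaf : IsLeafVx G w := by unfold IsLeafVx; omega
    exact ⟨w, nil, ⟨IsPath.nil, hleaf, by simp⟩, by simp [inSubtree_self]⟩

-- Climbing along the thread, every vertex passed has a single child until the thread turns
-- down at the root, whose other branch is then a line.
lemma IsThread.inSubtree_of_two_le_numChildren (hT : G.IsTree) {q : G.Walk a l}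
    (hq : IsThread q) (hab : IsChild G r a b) (hbq : b ∉ q.support) (hu : u ≠ r)
    (hn : 2 ≤ numChildren G r u) : InSubtree G r b u := by
  induction q generalizing b with
  | @nil x =>
    have hleaf : G.degree x = 1 := hq.2.1
    have := one_le_numChildren hab
    have hxr : x = r := by
      by_contra hxr
      have := degree_eq_numChildren_add_one hT hxr
      omega
    subst x
    have := degree_root_eq_numChildren hT r
    obtain ⟨c, hc, hcu⟩ := exists_isChild_inSubtree hT (inSubtree_root G r u) hu
    rwa [hab.eq_of_numChildren_le_one (by omega) hc]
  | @cons a a' l h q ih =>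
    have hdeg := hq.degree_start
    rcases isChild_or_isChild_of_adj hT r h with hc | hp
    · have ha'b : a' ≠ b := fun e => hbq (e ▸ List.mem_cons_of_mem a q.start_mem_support)
      have := two_le_numChildren hab hc ha'b.symm
      have har : a = r := by
        by_contra har
        have := degree_eq_numChildren_add_one hT har
        omega
      subst a
      have := degree_root_eq_numChildren hT r
      have hline := hq.tail.subtreeIsLine hT hc hq.notMem_support
      obtain ⟨c, hc', hcu⟩ := exists_isChild_inSubtree hT (inSubtree_root G r u) hu
      by_contra hbu
      have hcb : c ≠ b := by rintro rfl; exact hbu hcu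
      have hca' : c ≠ a' := by
        rintro rfl
        have := hline u hcu
        change numChildren G r u ≤ 1 at this
        omega
      have := three_le_numChildren hab hc hc' ha'b.symm hcb.symm hca'.symm
      omega
    · have := degree_eq_numChildren_add_one hT hp.ne_root
      have hua : u ≠ a := by
        rintro rfl
        omega
      exact (ih hq.tail hp hq.notMem_support).to_child hT hua (by omega) hab

lemma isExtMajor_of_hasPK (hT : G.IsTree) (h : HasPK G r v) (hv : v ≠ r) : IsExtMajor G v := by
  obtain ⟨hn, w, hw, hline⟩ := h
  obtain ⟨l, q, hq, hsub⟩ := hline.exists_isThread hT hw.ne_root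
  refine isExtMajor_iff_exists_isThread.2 ⟨?_, w, hw.1, l, q, fun hvq => ?_, hq⟩
  · have := degree_eq_numChildren_add_one hT hv
    change 2 ≤ numChildren G r v at hn
    omega
  · have := (hsub v hvq).dist_le
    have := hw.2
    omega

lemma IsExtMajor.isTopBranching (hT : G.IsTree) (hE : IsExtMajor G v) (hS : ¬HasPK G r v) :
    IsTopBranching G r v := by
  obtain ⟨hdeg, w, h, l, q, hvq, hq⟩ := isExtMajor_iff_exists_isThread.1 hE
  rcases isChild_or_isChild_of_adj hT r h with hc | hp
  · refine absurd ⟨?_, w, hc, hq.subtreeIsLine hT hc hvq⟩ hS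
    by_cases hv : v = r
    · subst hv
      have := degree_root_eq_numChildren hT v
      exact (by omega : 2 ≤ numChildren G v v)
    · have := degree_eq_numChildren_add_one hT hv
      exact (by omega : 2 ≤ numChildren G r v)
  · have := degree_eq_numChildren_add_one hT hp.ne_root
    exact ⟨hp.ne_root, by omega,
      fun u hu hn => hq.inSubtree_of_two_le_numChildren hT hp hvq hu hn⟩

end Legs

lemma natAbs_ncard_sub_ncard_le_one {α : Type*} [Finite α] {s t : Set α}
    (hst : (s \ t).Subsingleton) (hts : (t \ s).Subsingleton) :
    ((s.ncard : ℤ) - t.ncard).natAbs ≤ 1 := by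
  have := Set.ncard_inter_add_ncard_sdiff_eq_ncard s t
  have := Set.ncard_inter_add_ncard_sdiff_eq_ncard t s
  have := Set.ncard_le_one_iff_subsingleton.2 hst
  have := Set.ncard_le_one_iff_subsingleton.2 hts
  rw [Set.inter_comm t s] at *
  omega

/-- For every finite rooted tree `T`, `|n_{P_K}(T) - |K(T)|| ≤ 1`, where `n_{P_K}(T)` is the
number of vertices whose subtree has property `P_K` and `K(T)` is the set of exterior major
vertices of `T`. -/
theorem abs_countPK_sub_extMajor_le_one (G : SimpleGraph V) [DecidableRel G.Adj]
    (r : V) (hT : G.IsTree) :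
    ((Nat.card {v : V // HasPK G r v} : ℤ) - Nat.card {v : V // IsExtMajor G v}).natAbs ≤ 1 := by
  have hPK : ({v | HasPK G r v} \ {v | IsExtMajor G v}).Subsingleton :=
    Set.subsingleton_singleton.anti fun v ⟨hS, hE⟩ =>
      by_contra fun hv => hE (isExtMajor_of_hasPK hT hS hv)
  have hExt : ({v | IsExtMajor G v} \ {v | HasPK G r v}).Subsingleton :=
    fun v ⟨hE, hS⟩ v' ⟨hE', hS'⟩ =>
      (hE.isTopBranching hT hS).eq hT (hE'.isTopBranching hT hS')
  have := natAbs_ncard_sub_ncard_le_one hPK hExt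
  rwa [← Nat.card_coe_set_eq, ← Nat.card_coe_set_eq] at this
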